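/- arXiv:2409.08594 — 2 statements merged into one kernel-verified Lean document; each statement's English description precedes it below -/
import Mathlib

section
/- For α ≥ 1, the constant K_α := sup_{s ∈ ℝ, s ≠ 0} (e^s - 1 - s)/(e^{α s²} - 1) satisfies K_α ≤ C/α for some absolute constant C > 0. -/
open Real

lemma key_small {s : ℝ} (hs : |s| ≤ 1) : Real.exp s - 1 - s ≤ s ^ 2 := by
  have h := Real.exp_bound hs (n := 2) (by norm_num)
  have hsum : ∑ m ∈ Finset.range 2, s ^ m / m.factorial = 1 + s := by
    simp [Finset.sum_range_succ]
  rw [hsum] at h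
  have h2 : Real.exp s - (1 + s) ≤ |s| ^ 2 * (3 / 2 / 2 * 2 / 2) := by
    calc Real.exp s - (1 + s) ≤ |Real.exp s - (1 + s)| := le_abs_self _
      _ ≤ |s| ^ 2 * ((2 + 1 : ℕ) / ((2 : ℕ).factorial * 2)) := h
      _ = |s| ^ 2 * (3 / 2 / 2 * 2 / 2) := by norm_num [Nat.factorial]
  have : |s| ^ 2 = s ^ 2 := sq_abs s
  nlinarith [sq_nonneg s]

lemma key2 (s : ℝ) : Real.exp s - 1 - s ≤ 2 * (Real.exp (s ^ 2) - 1) := by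
  have hsq : s ^ 2 ≤ Real.exp (s ^ 2) - 1 := by
    have := Real.add_one_le_exp (s ^ 2); linarith
  rcases le_or_gt (|s|) 1 with h | h
  · have := key_small h; nlinarith [sq_nonneg s]
  · rcases le_or_gt s 0 with hs | hs
    · -- s ≤ -1
      have h1 : Real.exp s ≤ 1 := Real.exp_le_one_iff.mpr hs
      have h2 : -s ≤ s ^ 2 := by nlinarith [abs_of_nonpos hs]
      linarith
    · -- s ≥ 1
      have h1 : (1:ℝ) ≤ s := by rw [abs_of_pos hs] at h; linarith
      have h2 : Real.exp s ≤ Real.exp (s ^ 2) := by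
        apply Real.exp_le_exp.mpr; nlinarith
      have h3 : (2:ℝ) ≤ Real.exp (s ^ 2) := by
        calc (2:ℝ) ≤ Real.exp 1 := by
              have := Real.add_one_le_exp (1:ℝ); linarith
          _ ≤ Real.exp (s ^ 2) := Real.exp_le_exp.mpr (by nlinarith)
      nlinarith [Real.exp_pos s]

lemma keyA {α x : ℝ} (hα : 1 ≤ α) (hx : 0 ≤ x) :
    α * (Real.exp x - 1) ≤ Real.exp (α * x) - 1 := by
  have hb := one_add_mul_self_le_rpow_one_add (s := Real.exp x - 1)
    (by nlinarith [Real.exp_pos x]) hα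
  have hpos : (0:ℝ) < Real.exp x := Real.exp_pos x
  rw [show (1 : ℝ) + (Real.exp x - 1) = Real.exp x by ring] at hb
  have : (Real.exp x) ^ α = Real.exp (α * x) := by
    rw [← Real.exp_log hpos, ← Real.exp_mul, Real.log_exp]
    congr 1; ring
  rw [this] at hb; linarith

theorem stmt_2 : ∃ C : ℝ, 0 < C ∧ ∀ α : ℝ, 1 ≤ α → ∀ s : ℝ, s ≠ 0 →
    (Real.exp s - 1 - s) / (Real.exp (α * s ^ 2) - 1) ≤ C / α := by
  refine ⟨2, by norm_num, fun α hα s hs => ?_⟩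
  have hαpos : (0:ℝ) < α := by linarith
  have hs2 : 0 < s ^ 2 := by positivity
  have hden : 0 < Real.exp (α * s ^ 2) - 1 := by
    have : (1:ℝ) < Real.exp (α * s ^ 2) := by
      rw [Real.one_lt_exp_iff]; positivity
    linarith
  rw [div_le_div_iff₀ hden hαpos]
  have h1 := keyA hα (le_of_lt hs2)
  have h2 := key2 s
  nlinarith
end

section
/- Let 0 < b ≤ 1 and α > 0. There exists a constant C > 0 such that for every radially symmetric u ∈ H¹(ℝ²) and almost every x ∈ ℝ², |x|^b |e^{u(x)} - 1 - u(x)| ≤ C ‖u‖_{H¹}^{2b} (|u(x)|^{2(1-b)} + e^{α u(x)²} - 1). -/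
open MeasureTheory

noncomputable def H1Norm {N : ℕ} (u : EuclideanSpace ℝ (Fin N) → ℝ) : ℝ :=
  Real.sqrt (((eLpNorm u 2 volume).toReal) ^ 2 +
    ((eLpNorm (fun x => ‖fderiv ℝ u x‖) 2 volume).toReal) ^ 2)

/-!
Write `t = u x`. The scalar inequality `|eᵗ - 1 - t| ≤ C |t|^{2b} (|t|^{2(1-b)} + e^{αt²} - 1)`
holds with `C` depending only on `α`: for `|t| ≤ 1` the left side is at most `t²`, and for
`|t| ≥ 1` it is at most `3 e^{|t|}`, which `e^{αt²} - 1` dominates up to a constant. Multiplying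
by `|x|^b` leaves `(|x| t²)^b`, and Strauss' radial lemma `|x| u(x)² ≤ S ‖u‖²_{H¹}` bounds it by
`S^b ‖u‖_{H¹}^{2b}`. The radial lemma follows from the one-dimensional estimate
`g(r)² = -∫_r^∞ (g²)' ≤ ∫_r^∞ (y/r)(g² + g'²)` for the radial profile `g` (`g²` vanishes at
infinity since both `g²` and `(g²)'` are integrable there); in polar coordinates
`∫_0^∞ y (g² + g'²)` is at most `‖u‖²_{H¹}` divided by the length of the unit circle.
-/

open Set Filter Topology Metric

namespace Real

lemma abs_exp_sub_one_sub_le_three_mul_exp_abs (t : ℝ) : |exp t - 1 - t| ≤ 3 * exp |t| := by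
  have h1 : exp t ≤ exp |t| := exp_le_exp.2 (le_abs_self t)
  have h2 : 1 ≤ exp |t| := one_le_exp (abs_nonneg t)
  have h3 : |t| ≤ exp |t| := by linarith [add_one_le_exp |t|]
  rw [abs_le]
  constructor <;> linarith [exp_pos t, neg_abs_le t, le_abs_self t]

lemma exp_abs_le_mul_exp_mul_sq {α : ℝ} (hα : 0 < α) (t : ℝ) :
    exp |t| ≤ exp (1 / (4 * α)) * exp (α * t ^ 2) := by
  rw [← exp_add, exp_le_exp, div_add' _ _ _ (by positivity), le_div_iff₀ (by positivity)]
  have : (2 * α * |t| - 1) ^ 2 = 4 * α * (α * t ^ 2) - 4 * α * |t| + 1 := by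
    rw [sub_sq, mul_pow, sq_abs]; ring
  nlinarith [sq_nonneg (2 * α * |t| - 1)]

lemma exp_mul_one_sub_exp_neg_le {a s : ℝ} (hs : a ≤ s) :
    exp s * (1 - exp (-a)) ≤ exp s - 1 := by
  have : exp s * exp (-a) = exp (s - a) := by rw [← exp_add, sub_eq_add_neg]
  nlinarith [one_le_exp (sub_nonneg.2 hs)]

noncomputable def expGrowthConst (α : ℝ) : ℝ := 3 * exp (1 / (4 * α)) / (1 - exp (-(α / 2)))

lemma abs_exp_sub_one_sub_le_mul_exp_mul_sq_sub_one {α t : ℝ} (hα : 0 < α) (ht : 1 ≤ |t|) :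
    |exp t - 1 - t| ≤ expGrowthConst α * (exp (α * t ^ 2) - 1) := by
  have hs : α / 2 ≤ α * t ^ 2 := by
    have : 1 ≤ t ^ 2 := by rw [← sq_abs]; nlinarith
    nlinarith
  calc |exp t - 1 - t| ≤ 3 * exp |t| := abs_exp_sub_one_sub_le_three_mul_exp_abs t
    _ ≤ 3 * (exp (1 / (4 * α)) * exp (α * t ^ 2)) := by
        gcongr; exact exp_abs_le_mul_exp_mul_sq hα t
    _ ≤ 3 * exp (1 / (4 * α)) * ((exp (α * t ^ 2) - 1) / (1 - exp (-(α / 2)))) := by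
        rw [← mul_assoc]
        gcongr
        rw [le_div_iff₀ (sub_pos.2 (exp_lt_one_iff.2 (by linarith)))]
        exact exp_mul_one_sub_exp_neg_le hs
    _ = expGrowthConst α * (exp (α * t ^ 2) - 1) := by unfold expGrowthConst; ring

lemma abs_rpow_add_exp_mul_sq_sub_one_nonneg {α : ℝ} (hα : 0 ≤ α) (c t : ℝ) :
    0 ≤ |t| ^ c + exp (α * t ^ 2) - 1 := by
  have := one_le_exp (by positivity : 0 ≤ α * t ^ 2)
  have := rpow_nonneg (abs_nonneg t) c
  linarith

lemma abs_exp_sub_one_sub_le_max_mul_rpow_mul {α b : ℝ} (hα : 0 < α) (hb : 0 ≤ b) (t : ℝ) :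
    |exp t - 1 - t| ≤ max 1 (expGrowthConst α) * |t| ^ (2 * b) *
      (|t| ^ (2 * (1 - b)) + exp (α * t ^ 2) - 1) := by
  have hR := abs_rpow_add_exp_mul_sq_sub_one_nonneg hα.le (2 * (1 - b)) t
  have hexp := one_le_exp (by positivity : 0 ≤ α * t ^ 2)
  rcases le_total |t| 1 with ht | ht
  · calc |exp t - 1 - t| ≤ t ^ 2 := abs_exp_sub_one_sub_id_le ht
      _ = |t| ^ (2 * b) * |t| ^ (2 * (1 - b)) := by
          rw [← rpow_add' (abs_nonneg t) (by ring_nf; norm_num), ← sq_abs, ← rpow_two]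
          ring_nf
      _ ≤ 1 * |t| ^ (2 * b) * (|t| ^ (2 * (1 - b)) + exp (α * t ^ 2) - 1) := by
          rw [one_mul]
          gcongr
          linarith
      _ ≤ _ := by gcongr; exact le_max_left _ _
  · calc |exp t - 1 - t| ≤ expGrowthConst α * (exp (α * t ^ 2) - 1) :=
          abs_exp_sub_one_sub_le_mul_exp_mul_sq_sub_one hα ht
      _ ≤ max 1 (expGrowthConst α) * (|t| ^ (2 * b) *
            (|t| ^ (2 * (1 - b)) + exp (α * t ^ 2) - 1)) := by
          gcongr
          · exact le_max_right _ _
          · refine le_trans ?_ (le_mul_of_one_le_left hR (one_le_rpow ht (by positivity)))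
            linarith [rpow_nonneg (abs_nonneg t) (2 * (1 - b))]
      _ = _ := by ring

end Real

lemma pow_mul_sq_le_integral_Ioi {g : ℝ → ℝ} (hg : DifferentiableOn ℝ g (Ioi 0)) {k : ℕ}
    (hint : IntegrableOn (fun y => y ^ k * (g y ^ 2 + deriv g y ^ 2)) (Ioi 0))
    {r : ℝ} (hr : 0 < r) :
    r ^ k * g r ^ 2 ≤ ∫ y in Ioi 0, y ^ k * (g y ^ 2 + deriv g y ^ 2) := by
  set w : ℝ → ℝ := fun y => y ^ k * (g y ^ 2 + deriv g y ^ 2)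
  have hIci : Ici r ⊆ Ioi 0 := Ici_subset_Ioi.2 hr
  have hsq_deriv : ∀ y ∈ Ici r, HasDerivAt (fun y => g y ^ 2) (2 * g y * deriv g y) y := by
    intro y hy
    simpa using ((hg.differentiableAt (Ioi_mem_nhds (hIci hy))).hasDerivAt).fun_pow 2
  have hle_w : ∀ y ∈ Ioi r, g y ^ 2 + deriv g y ^ 2 ≤ (r ^ k)⁻¹ * w y := by
    intro y hy
    rw [le_inv_mul_iff₀ (by positivity)]
    show r ^ k * _ ≤ y ^ k * _
    gcongr
    exact le_of_lt hy
  have hw : IntegrableOn (fun y => (r ^ k)⁻¹ * w y) (Ioi r) :=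
    (hint.mono_set (Ioi_subset_Ioi hr.le)).const_mul _
  have hg_meas : AEStronglyMeasurable g (volume.restrict (Ioi r)) :=
    (hg.continuousOn.mono (Ioi_subset_Ioi hr.le)).aestronglyMeasurable measurableSet_Ioi
  have hint_sq : IntegrableOn (fun y => g y ^ 2) (Ioi r) := by
    refine hw.mono' (hg_meas.pow 2) ((ae_restrict_iff' measurableSet_Ioi).2 (ae_of_all _ ?_))
    intro y hy
    rw [Real.norm_of_nonneg (sq_nonneg _)]
    linarith [hle_w y hy, sq_nonneg (deriv g y)]
  have habs : ∀ y ∈ Ioi r, |2 * g y * deriv g y| ≤ (r ^ k)⁻¹ * w y := by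
    intro y hy
    refine (abs_le.2 ⟨?_, ?_⟩).trans (hle_w y hy) <;>
      nlinarith [sq_nonneg (g y + deriv g y), sq_nonneg (g y - deriv g y)]
  have hint_deriv : IntegrableOn (fun y => 2 * g y * deriv g y) (Ioi r) :=
    hw.mono' ((hg_meas.const_mul 2).mul (measurable_deriv g).aestronglyMeasurable)
      ((ae_restrict_iff' measurableSet_Ioi).2 (ae_of_all _ habs))
  have hlim : Tendsto (fun y => g y ^ 2) atTop (𝓝 0) :=
    tendsto_zero_of_hasDerivAt_of_integrableOn_Ioi
      (fun y hy => hsq_deriv y (Ioi_subset_Ici_self hy)) hint_deriv hint_sq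
  have hftc := integral_Ioi_of_hasDerivAt_of_tendsto' hsq_deriv hint_deriv hlim
  calc r ^ k * g r ^ 2 = r ^ k * -∫ y in Ioi r, 2 * g y * deriv g y := by rw [hftc]; ring
    _ ≤ r ^ k * ∫ y in Ioi r, (r ^ k)⁻¹ * w y := by
        gcongr
        refine (neg_le_abs _).trans ((abs_integral_le_integral_abs).trans ?_)
        exact setIntegral_mono_on hint_deriv.abs hw measurableSet_Ioi habs
    _ = ∫ y in Ioi r, w y := by
        rw [integral_const_mul, ← mul_assoc, mul_inv_cancel₀ (by positivity), one_mul]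
    _ ≤ ∫ y in Ioi 0, w y :=
        setIntegral_mono_set hint
          ((ae_restrict_iff' measurableSet_Ioi).2 (ae_of_all _ fun y hy => by
            have : (0 : ℝ) < y := hy
            positivity))
          (Ioi_subset_Ioi hr.le).eventuallyLE

lemma MeasureTheory.MemLp.toReal_eLpNorm_two_sq {α F : Type*} [MeasurableSpace α]
    {μ : Measure α} [NormedAddCommGroup F] {f : α → F} (hf : MemLp f 2 μ) :
    (eLpNorm f 2 μ).toReal ^ 2 = ∫ a, ‖f a‖ ^ 2 ∂μ := by
  rw [hf.eLpNorm_eq_integral_rpow_norm two_ne_zero ENNReal.ofNat_ne_top,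
    ENNReal.toReal_ofReal (by positivity), ← Real.rpow_natCast, ← Real.rpow_mul (by positivity)]
  norm_num

lemma sq_H1Norm {N : ℕ} {u : EuclideanSpace ℝ (Fin N) → ℝ} (hu : MemLp u 2 volume)
    (hdu : MemLp (fun x => ‖fderiv ℝ u x‖) 2 volume) :
    H1Norm u ^ 2 = ∫ x, (u x ^ 2 + ‖fderiv ℝ u x‖ ^ 2) := by
  rw [H1Norm, Real.sq_sqrt (by positivity), hu.toReal_eLpNorm_two_sq, hdu.toReal_eLpNorm_two_sq,
    ← integral_add]
  · simp only [Real.norm_eq_abs, sq_abs]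
  · exact (memLp_two_iff_integrable_sq_norm hu.1).1 hu
  · exact (memLp_two_iff_integrable_sq_norm hdu.1).1 hdu

lemma norm_fderiv_eq_of_norm_eq {E : Type*} [NormedAddCommGroup E] [InnerProductSpace ℝ E]
    [CompleteSpace E] {u : E → ℝ} (hrad : ∀ x y, ‖x‖ = ‖y‖ → u x = u y)
    (hu : Differentiable ℝ u) {x y : E} (h : ‖x‖ = ‖y‖) :
    ‖fderiv ℝ u x‖ = ‖fderiv ℝ u y‖ := by
  set R : E ≃ₗᵢ[ℝ] E := Submodule.reflection (ℝ ∙ (x - y))ᗮ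
  have hRx : R x = y := Submodule.reflection_sub h
  have huR : u ∘ R = u := funext fun z => hrad (R z) z (R.norm_map z)
  have hcomp : HasFDerivAt (u ∘ R)
      ((fderiv ℝ u (R x)).comp R.toContinuousLinearEquiv.toContinuousLinearMap) x :=
    (hu (R x)).hasFDerivAt.comp x R.toContinuousLinearEquiv.hasFDerivAt
  rw [huR] at hcomp
  rw [hcomp.fderiv, ← hRx]
  exact ContinuousLinearMap.opNorm_comp_linearIsometryEquiv _ R

noncomputable def straussConst (N : ℕ) : ℝ :=
  (N * volume.real (ball (0 : EuclideanSpace ℝ (Fin N)) 1))⁻¹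

lemma straussConst_pos (N : ℕ) [NeZero N] : 0 < straussConst N := by
  have := NeZero.pos N
  have : 0 < volume.real (ball (0 : EuclideanSpace ℝ (Fin N)) 1) :=
    ENNReal.toReal_pos (measure_ball_pos _ _ one_pos).ne' measure_ball_lt_top.ne
  unfold straussConst
  positivity

lemma pow_norm_mul_sq_le_of_radial {N : ℕ} [NeZero N] {u : EuclideanSpace ℝ (Fin N) → ℝ}
    (hrad : ∀ x y, ‖x‖ = ‖y‖ → u x = u y) (hu : Differentiable ℝ u)
    (hu2 : MemLp u 2 volume) (hdu2 : MemLp (fun x => ‖fderiv ℝ u x‖) 2 volume)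
    {x : EuclideanSpace ℝ (Fin N)} (hx : x ≠ 0) :
    ‖x‖ ^ (N - 1) * u x ^ 2 ≤ straussConst N * H1Norm u ^ 2 := by
  obtain ⟨e, he⟩ := exists_norm_eq (EuclideanSpace ℝ (Fin N)) zero_le_one
  set g : ℝ → ℝ := fun r => u (r • e)
  set G : ℝ → ℝ := fun r => ‖fderiv ℝ u (r • e)‖
  have hnorm : ∀ z : EuclideanSpace ℝ (Fin N), ‖z‖ = ‖‖z‖ • e‖ := fun z => by
    simp [norm_smul, he]
  have hgu : ∀ z, u z = g ‖z‖ := fun z => hrad _ _ (hnorm z)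
  have hGu : ∀ z, ‖fderiv ℝ u z‖ = G ‖z‖ := fun z =>
    norm_fderiv_eq_of_norm_eq hrad hu (hnorm z)
  have hg_diff : Differentiable ℝ g := hu.comp (differentiable_id.smul_const e)
  have hderiv_le : ∀ r, |deriv g r| ≤ G r := fun r => by
    have hg_deriv : HasDerivAt g (fderiv ℝ u (r • e) e) r := by
      have := (hu _).hasFDerivAt.comp_hasDerivAt r ((hasDerivAt_id r).smul_const e)
      simp only [id, one_smul] at this
      exact this
    rw [hg_deriv.deriv]
    simpa [he] using (fderiv ℝ u (r • e)).le_opNorm e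
  have hF : Integrable (fun z : EuclideanSpace ℝ (Fin N) => g ‖z‖ ^ 2 + G ‖z‖ ^ 2) := by
    simp_rw [← hgu, ← hGu]
    exact ((memLp_two_iff_integrable_sq hu2.1).1 hu2).add
      ((memLp_two_iff_integrable_sq hdu2.1).1 hdu2)
  have hF' := (integrable_fun_norm_addHaar volume (f := fun y => g y ^ 2 + G y ^ 2)).1 hF
  simp only [finrank_euclideanSpace, Fintype.card_fin, smul_eq_mul] at hF'
  have hH : H1Norm u ^ 2 = N * volume.real (ball (0 : EuclideanSpace ℝ (Fin N)) 1) *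
      ∫ y in Ioi 0, y ^ (N - 1) * (g y ^ 2 + G y ^ 2) := by
    simp_rw [sq_H1Norm hu2 hdu2, hgu, hGu]
    rw [integral_fun_norm_addHaar volume (fun y => g y ^ 2 + G y ^ 2)]
    simp [finrank_euclideanSpace, mul_assoc]
  have hmono : ∀ y ∈ Ioi (0 : ℝ),
      y ^ (N - 1) * (g y ^ 2 + deriv g y ^ 2) ≤ y ^ (N - 1) * (g y ^ 2 + G y ^ 2) := by
    intro y hy
    have : (0 : ℝ) < y := hy
    rw [← sq_abs (deriv g y)]
    gcongr
    exact hderiv_le y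
  have hint : IntegrableOn (fun y => y ^ (N - 1) * (g y ^ 2 + deriv g y ^ 2)) (Ioi 0) := by
    refine hF'.mono' ?_ ((ae_restrict_iff' measurableSet_Ioi).2 (ae_of_all _ fun y hy => ?_))
    · have := hg_diff.continuous.measurable
      have := measurable_deriv g
      fun_prop
    · have : (0 : ℝ) < y := hy
      rw [Real.norm_of_nonneg (by positivity)]
      exact hmono y hy
  have hball := inv_pos.1 (straussConst_pos N)
  calc ‖x‖ ^ (N - 1) * u x ^ 2 = ‖x‖ ^ (N - 1) * g ‖x‖ ^ 2 := by rw [hgu]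
    _ ≤ ∫ y in Ioi 0, y ^ (N - 1) * (g y ^ 2 + deriv g y ^ 2) :=
        pow_mul_sq_le_integral_Ioi hg_diff.differentiableOn hint (norm_pos_iff.2 hx)
    _ ≤ ∫ y in Ioi 0, y ^ (N - 1) * (g y ^ 2 + G y ^ 2) :=
        setIntegral_mono_on hint hF' measurableSet_Ioi hmono
    _ = _ := by rw [hH, straussConst, inv_mul_cancel_left₀ hball.ne']

theorem stmt_11_general (b α : ℝ) (hb0 : 0 < b) (hα : 0 < α) :
    ∃ C : ℝ, 0 < C ∧ ∀ u : EuclideanSpace ℝ (Fin 2) → ℝ,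
      (∀ x y, ‖x‖ = ‖y‖ → u x = u y) →
      Differentiable ℝ u →
      MemLp u 2 volume →
      MemLp (fun x => ‖fderiv ℝ u x‖) 2 volume →
      ∀ᵐ x : EuclideanSpace ℝ (Fin 2),
        ‖x‖ ^ b * |Real.exp (u x) - 1 - u x| ≤
          C * (H1Norm u) ^ (2 * b) *
            (|u x| ^ (2 * (1 - b)) + Real.exp (α * (u x) ^ 2) - 1) := by
  have hS := straussConst_pos 2
  refine ⟨max 1 (Real.expGrowthConst α) * straussConst 2 ^ b, by positivity,
    fun u hrad hu hu2 hdu2 => ae_of_all _ fun x => ?_⟩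
  have hstrauss : ‖x‖ * u x ^ 2 ≤ straussConst 2 * H1Norm u ^ 2 := by
    rcases eq_or_ne x 0 with rfl | hx
    · simp only [norm_zero, zero_mul]
      positivity
    · simpa using pow_norm_mul_sq_le_of_radial hrad hu hu2 hdu2 hx
  have hR := Real.abs_rpow_add_exp_mul_sq_sub_one_nonneg hα.le (2 * (1 - b)) (u x)
  calc ‖x‖ ^ b * |Real.exp (u x) - 1 - u x|
      ≤ ‖x‖ ^ b * (max 1 (Real.expGrowthConst α) * |u x| ^ (2 * b) *
          (|u x| ^ (2 * (1 - b)) + Real.exp (α * u x ^ 2) - 1)) := by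
        gcongr
        exact Real.abs_exp_sub_one_sub_le_max_mul_rpow_mul hα hb0.le (u x)
    _ = max 1 (Real.expGrowthConst α) * (‖x‖ * u x ^ 2) ^ b *
          (|u x| ^ (2 * (1 - b)) + Real.exp (α * u x ^ 2) - 1) := by
        rw [Real.mul_rpow (norm_nonneg x) (sq_nonneg _), ← sq_abs (u x), ← Real.rpow_natCast,
          ← Real.rpow_mul (abs_nonneg _)]
        push_cast
        ring
    _ ≤ max 1 (Real.expGrowthConst α) * (straussConst 2 * H1Norm u ^ 2) ^ b *
          (|u x| ^ (2 * (1 - b)) + Real.exp (α * u x ^ 2) - 1) := by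
        gcongr
    _ = _ := by
        rw [Real.mul_rpow hS.le (sq_nonneg _), ← Real.rpow_natCast,
          ← Real.rpow_mul (show 0 ≤ H1Norm u from Real.sqrt_nonneg _)]
        push_cast
        ring

theorem stmt_11 (b α : ℝ) (hb0 : 0 < b) (hb : b ≤ 1) (hα : 0 < α) :
    ∃ C : ℝ, 0 < C ∧ ∀ u : EuclideanSpace ℝ (Fin 2) → ℝ,
      (∀ x y, ‖x‖ = ‖y‖ → u x = u y) →
      Differentiable ℝ u →
      MemLp u 2 volume →
      MemLp (fun x => ‖fderiv ℝ u x‖) 2 volume →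
      ∀ᵐ x : EuclideanSpace ℝ (Fin 2),
        ‖x‖ ^ b * |Real.exp (u x) - 1 - u x| ≤
          C * (H1Norm u) ^ (2 * b) *
            (|u x| ^ (2 * (1 - b)) + Real.exp (α * (u x) ^ 2) - 1) :=
  stmt_11_general b α hb0 hα
end
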